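/- Assume 0 < ν < 1 and βʲ > βⁱ > 0. Let θⁱ = min{ −(ln ν)/βʲ , T }. Then the pair of controls (Γ_{βⁱ}(θⁱ), Γ_{βʲ}(T)) is a Nash equilibrium of the one-lock game: Jⁱ(a, Γ_{βʲ}(T)) ≤ Jⁱ(Γ_{βⁱ}(θⁱ), Γ_{βʲ}(T)) for every admissible control a of agent i, and Jʲ(b, Γ_{βⁱ}(θⁱ)) ≤ Jʲ(Γ_{βʲ}(T), Γ_{βⁱ}(θⁱ)) for every admissible control b of agent j. (Paper's Theorem 3, case βʲ > βⁱ.) -/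

import Mathlib

set_option linter.unusedSectionVars false
set_option maxHeartbeats 1000000


open MeasureTheory Real Set
open intervalIntegral

/-- Cumulative rate `A(t) = ∫₀ᵗ a(s) ds` of a control `a`. -/
noncomputable def cum (a : ℝ → ℝ) (t : ℝ) : ℝ := ∫ s in (0:ℝ)..t, a s

/-- One-lock payoff of agent `i`:
`Jⁱ(a,b) = ∫₀ᵀ (e^{−B(s)} − ν A(s)) e^{−A(s)} a(s) ds − ν A(T) e^{−A(T)}`. -/
noncomputable def oneLockPayoff (T ν : ℝ) (a b : ℝ → ℝ) : ℝ :=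
  (∫ s in (0:ℝ)..T,
      (Real.exp (-(cum b s)) - ν * cum a s) * Real.exp (-(cum a s)) * a s)
    - ν * cum a T * Real.exp (-(cum a T))

/-- Time-threshold control `Γ_β(ψ)(t) = β · 𝟙_{[0,ψ]}(t)`. -/
noncomputable def threshold (β ψ : ℝ) : ℝ → ℝ :=
  fun t => if t ∈ Set.Icc (0:ℝ) ψ then β else 0

lemma II {f : ℝ → ℝ} (hf : Measurable f) {C : ℝ} (hC : ∀ s, |f s| ≤ C) (u v : ℝ) :
    IntervalIntegrable f volume u v := by
  constructor <;>
  · refine MeasureTheory.Integrable.mono' (integrable_const C) hf.aestronglyMeasurable ?_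
    exact Filter.Eventually.of_forall (fun s => hC s)

section Basic
variable {β : ℝ} {a : ℝ → ℝ} (ha : Measurable a) (h0 : ∀ s, 0 ≤ a s) (h1 : ∀ s, a s ≤ β)

include ha h0 h1

lemma aII (u v : ℝ) : IntervalIntegrable a volume u v :=
  II ha (C := β) (fun s => abs_le.2 ⟨by linarith [h0 s, (h0 s).trans (h1 s)], h1 s⟩) u v

lemma cum_mono : Monotone (cum a) := by
  intro x y hxy
  have h := integral_add_adjacent_intervals (a := 0) (b := x) (c := y)
    (aII ha h0 h1 0 x) (aII ha h0 h1 x y)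
  have : 0 ≤ ∫ s in x..y, a s := integral_nonneg hxy (fun u _ => h0 u)
  simp only [cum]; linarith

lemma cum_cont : Continuous (cum a) :=
  intervalIntegral.continuous_primitive (aII ha h0 h1) 0

omit ha h0 h1 in
lemma cum_zero : cum a 0 = 0 := by simp [cum]

lemma cum_nonneg {s : ℝ} (hs : 0 ≤ s) : 0 ≤ cum a s := by
  have := cum_mono ha h0 h1 hs
  rwa [cum_zero] at this

lemma cum_le {s : ℝ} (hs : 0 ≤ s) : cum a s ≤ β * s := by
  have : cum a s ≤ ∫ _ in (0:ℝ)..s, β :=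
    integral_mono hs (aII ha h0 h1 0 s) intervalIntegrable_const h1
  simpa [mul_comm] using this

end Basic


section Subst
variable {β : ℝ} {a : ℝ → ℝ} (ha : Measurable a) (h0 : ∀ s, 0 ≤ a s) (h1 : ∀ s, a s ≤ β)
  (aII : ∀ u v : ℝ, IntervalIntegrable a volume u v)
  (cum_mono : Monotone (cum a)) (cum_cont : Continuous (cum a))
  (cum_nonneg : ∀ {s : ℝ}, 0 ≤ s → 0 ≤ cum a s)

include ha h0 h1 aII cum_mono cum_cont cum_nonneg

lemma map_cum {t : ℝ} (ht : 0 ≤ t) :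
    Measure.map (cum a) ((volume.restrict (Ioc 0 t)).withDensity
      (fun s => ENNReal.ofReal (a s))) = volume.restrict (Ioc 0 (cum a t)) := by
  set μ := (volume.restrict (Ioc (0:ℝ) t)).withDensity (fun s => ENNReal.ofReal (a s)) with hμ
  have key : ∀ u v : ℝ, 0 ≤ u → u ≤ v → v ≤ t →
      μ (Ioc u v) = ENNReal.ofReal (cum a v - cum a u) := by
    intro u v hu huv hvt
    rw [hμ, withDensity_apply _ measurableSet_Ioc, Measure.restrict_restrict measurableSet_Ioc]
    have hsub : Ioc u v ∩ Ioc 0 t = Ioc u v := by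
      rw [inter_eq_left]; exact Ioc_subset_Ioc (by linarith) hvt
    rw [hsub, ← ofReal_integral_eq_lintegral_ofReal
      ((aII u v).1.mono_set (by simp [huv])) (Filter.Eventually.of_forall (fun s => h0 s))]
    congr 1
    have := integral_add_adjacent_intervals (a := 0) (b := u) (c := v) (aII 0 u) (aII u v)
    have h2 : (∫ s in u..v, a s) = ∫ s in Ioc u v, a s := integral_of_le huv
    simp only [cum]; linarith [h2]
  have hfin : IsFiniteMeasure μ := by
    constructor
    rw [hμ, withDensity_apply _ MeasurableSet.univ]
    calc ∫⁻ s in univ, ENNReal.ofReal (a s) ∂(volume.restrict (Ioc 0 t))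
        ≤ ∫⁻ _ in univ, ENNReal.ofReal β ∂(volume.restrict (Ioc 0 t)) := by
          refine lintegral_mono (fun s => ENNReal.ofReal_le_ofReal (h1 s))
      _ < ⊤ := by
          simp [Measure.restrict_apply, lt_top_iff_ne_top]
          exact ENNReal.mul_ne_top ENNReal.ofReal_ne_top (by simp [Real.volume_Ioc])
  have hmapfin : IsFiniteMeasure (Measure.map (cum a) μ) :=
    ⟨by rw [Measure.map_apply cum_cont.measurable MeasurableSet.univ]
        exact measure_lt_top μ _⟩
  refine Measure.ext_of_Iic _ _ (fun y => ?_)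
  rw [Measure.map_apply cum_cont.measurable measurableSet_Iic,
    Measure.restrict_apply measurableSet_Iic]
  rcases lt_or_ge y 0 with hy | hy
  · have h1' : cum a ⁻¹' Iic y ∩ Ioc 0 t = ∅ := by
      ext s; simp only [mem_inter_iff, mem_preimage, mem_Iic, mem_Ioc, mem_empty_iff_false,
        iff_false]
      rintro ⟨hsy, hs0, hst⟩
      exact absurd hsy (by linarith [cum_nonneg (le_of_lt hs0)])
    have h2' : Iic y ∩ Ioc 0 (cum a t) = ∅ := by
      ext s; simp only [mem_inter_iff, mem_Iic, mem_Ioc, mem_empty_iff_false, iff_false]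
      rintro ⟨hsy, hs0, _⟩; linarith
    rw [hμ, withDensity_apply _ ((measurableSet_Iic.preimage cum_cont.measurable)),
      Measure.restrict_restrict (measurableSet_Iic.preimage cum_cont.measurable), h1', h2']
    simp
  rcases le_or_gt (cum a t) y with hyt | hyt
  · -- y ≥ cum a t : full mass
    have h1' : cum a ⁻¹' Iic y ∩ Ioc 0 t = Ioc 0 t := by
      rw [inter_eq_right]
      intro s hs
      simp only [mem_preimage, mem_Iic]
      exact le_trans (cum_mono hs.2) hyt
    have h2' : Iic y ∩ Ioc 0 (cum a t) = Ioc 0 (cum a t) := by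
      rw [inter_eq_right]; exact fun s hs => le_trans hs.2 hyt
    have : μ (cum a ⁻¹' Iic y) = μ (Ioc 0 t) := by
      rw [hμ, withDensity_apply _ (measurableSet_Iic.preimage cum_cont.measurable),
        withDensity_apply _ measurableSet_Ioc,
        Measure.restrict_restrict (measurableSet_Iic.preimage cum_cont.measurable),
        Measure.restrict_restrict measurableSet_Ioc, h1', inter_eq_left.2 (fun x hx => hx)]
    rw [this, key 0 t le_rfl ht le_rfl, h2']
    simp [Real.volume_Ioc, cum]
  · -- 0 ≤ y < cum a t
    set S := Icc 0 t ∩ cum a ⁻¹' Iic y with hS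
    have hSne : S.Nonempty := ⟨0, ⟨⟨le_rfl, ht⟩, by simpa [cum] using hy⟩⟩
    have hSbdd : BddAbove S := ⟨t, fun s hs => hs.1.2⟩
    have hScl : IsClosed S := (isClosed_Icc).inter (isClosed_Iic.preimage cum_cont)
    set c := sSup S with hc
    have hcS : c ∈ S := hScl.csSup_mem hSne hSbdd
    have hc0 : 0 ≤ c := hcS.1.1
    have hct : c ≤ t := hcS.1.2
    have hcy : cum a c ≤ y := hcS.2
    have hacy : cum a c = y := by
      by_contra hne
      have hlt : cum a c < y := lt_of_le_of_ne hcy hne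
      have hctlt : c < t := by
        rcases eq_or_lt_of_le hct with h | h
        · exfalso; rw [h] at hlt; linarith
        · exact h
      have : ∀ᶠ s in nhds c, cum a s < y := by
        have := cum_cont.continuousAt (x := c)
        exact this.eventually_lt continuousAt_const hlt
      rcases Metric.eventually_nhds_iff.1 this with ⟨δ, hδ, hball⟩
      set s' := min (c + δ/2) t with hs'
      have hs'c : c < s' := by
        apply lt_min (by linarith) hctlt
      have hs't : s' ≤ t := min_le_right _ _
      have : cum a s' < y := hball (by
        simp only [hs', Real.dist_eq]
        rcases le_total (c + δ/2) t with h | h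
        · rw [min_eq_left h]; rw [abs_of_pos (by linarith)]; linarith
        · rw [min_eq_right h]; rw [abs_of_nonneg (by linarith)]; linarith)
      have : s' ∈ S := ⟨⟨by linarith, hs't⟩, le_of_lt this⟩
      exact absurd (le_csSup hSbdd this) (not_le.2 hs'c)
    have h1' : cum a ⁻¹' Iic y ∩ Ioc 0 t = Ioc 0 c := by
      ext s
      simp only [mem_inter_iff, mem_preimage, mem_Iic, mem_Ioc]
      constructor
      · rintro ⟨hsy, hs0, hst⟩
        exact ⟨hs0, le_csSup hSbdd ⟨⟨le_of_lt hs0, hst⟩, hsy⟩⟩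
      · rintro ⟨hs0, hsc⟩
        exact ⟨le_trans (cum_mono hsc) hcy, hs0, le_trans hsc hct⟩
    have : μ (cum a ⁻¹' Iic y) = μ (Ioc 0 c) := by
      rw [hμ, withDensity_apply _ (measurableSet_Iic.preimage cum_cont.measurable),
        withDensity_apply _ measurableSet_Ioc,
        Measure.restrict_restrict (measurableSet_Iic.preimage cum_cont.measurable),
        Measure.restrict_restrict measurableSet_Ioc, h1',
        inter_eq_left.2 (Ioc_subset_Ioc le_rfl hct)]
    rw [this, key 0 c le_rfl hc0 hct]
    have h2' : Iic y ∩ Ioc 0 (cum a t) = Ioc 0 y := by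
      ext s; simp only [mem_inter_iff, mem_Iic, mem_Ioc]
      constructor
      · rintro ⟨hsy, hs0, _⟩; exact ⟨hs0, hsy⟩
      · rintro ⟨hs0, hsy⟩; exact ⟨hsy, hs0, by linarith⟩
    rw [h2']
    simp [Real.volume_Ioc, hacy, show cum a 0 = (0:ℝ) from by simp [cum]]

lemma cum_subst {h : ℝ → ℝ} (hh : Continuous h) {t : ℝ} (ht : 0 ≤ t) :
    (∫ s in (0:ℝ)..t, h (cum a s) * a s) = ∫ y in (0:ℝ)..(cum a t), h y := by
  have hct : 0 ≤ cum a t := cum_nonneg ht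
  rw [integral_of_le ht, integral_of_le hct]
  have := map_cum ha h0 h1 aII cum_mono cum_cont (fun {s} hs => cum_nonneg hs) ht
  calc (∫ s in Ioc 0 t, h (cum a s) * a s)
      = ∫ s in Ioc 0 t, (fun r => (a r).toNNReal) s • h (cum a s) := by
        refine setIntegral_congr_fun measurableSet_Ioc (fun s _ => ?_)
        simp [NNReal.smul_def, Real.coe_toNNReal _ (h0 s), mul_comm]
    _ = ∫ s, h (cum a s) ∂((volume.restrict (Ioc 0 t)).withDensity
          (fun s => ENNReal.ofReal (a s))) := by
        rw [show (fun s => ENNReal.ofReal (a s))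
            = (fun s : ℝ => (((fun r => (a r).toNNReal) s : NNReal) : ENNReal)) from rfl]
        exact (integral_withDensity_eq_integral_smul (by measurability) _).symm
    _ = ∫ y, h y ∂(Measure.map (cum a) ((volume.restrict (Ioc 0 t)).withDensity
          (fun s => ENNReal.ofReal (a s)))) := by
        rw [integral_map cum_cont.measurable.aemeasurable hh.aestronglyMeasurable]
    _ = ∫ y in Ioc 0 (cum a t), h y := by rw [this]

end Subst


/-- integral of K·e^{-cu} -/
lemma int_exp_mul (K c x y : ℝ) (hc : c ≠ 0) :
    ∫ u in x..y, K * Real.exp (-(c*u)) = K/c * (Real.exp (-(c*x)) - Real.exp (-(c*y))) := by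
  have hF : ∀ u : ℝ, HasDerivAt (fun u => -(K/c) * Real.exp (-(c*u)))
      (K * Real.exp (-(c*u))) u := by
    intro u
    have h1 : HasDerivAt (fun u : ℝ => -(c*u)) (-c) u := by
      simpa using ((hasDerivAt_id u).const_mul c).fun_neg
    have h2 := (h1.exp).const_mul (-(K/c))
    refine h2.congr_deriv ?_
    field_simp
  rw [integral_eq_sub_of_hasDerivAt (fun u _ => hF u)
    (Continuous.intervalIntegrable (by continuity) x y)]
  ring

lemma threshold_measurable (β ψ : ℝ) : Measurable (threshold β ψ) :=
  Measurable.ite measurableSet_Icc measurable_const measurable_const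

lemma threshold_nonneg {β : ℝ} (hβ : 0 ≤ β) (ψ s : ℝ) : 0 ≤ threshold β ψ s := by
  unfold threshold; split <;> simp [hβ]

lemma threshold_le {β : ℝ} (hβ : 0 ≤ β) (ψ s : ℝ) : threshold β ψ s ≤ β := by
  unfold threshold; split <;> simp [hβ]

lemma cum_threshold {β ψ : ℝ} (hβ : 0 ≤ β) (hψ : 0 ≤ ψ) {s : ℝ} (hs : 0 ≤ s) :
    cum (threshold β ψ) s = β * min s ψ := by
  have hII : ∀ u v : ℝ, IntervalIntegrable (threshold β ψ) volume u v := by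
    intro u v
    constructor <;>
    · refine MeasureTheory.Integrable.mono' (integrable_const β)
        (threshold_measurable β ψ).aestronglyMeasurable ?_
      refine Filter.Eventually.of_forall (fun x => ?_)
      rw [Real.norm_eq_abs, abs_of_nonneg (threshold_nonneg hβ ψ x)]
      exact threshold_le hβ ψ x
  rcases le_total s ψ with h | h
  · rw [min_eq_left h]
    unfold cum
    rw [integral_congr (g := fun _ => β) (fun u hu => ?_), intervalIntegral.integral_const]
    · simp [smul_eq_mul, mul_comm]
    · rw [uIcc_of_le hs] at hu
      have : u ∈ Set.Icc (0:ℝ) ψ := ⟨hu.1, le_trans hu.2 h⟩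
      simp [threshold, this]
  · unfold cum
    rw [min_eq_right h, ← integral_add_adjacent_intervals (b := ψ) (hII 0 ψ) (hII ψ s)]
    have h1 : ∫ u in (0:ℝ)..ψ, threshold β ψ u = β * ψ := by
      rw [integral_congr (g := fun _ => β) (fun u hu => ?_), intervalIntegral.integral_const]
      · simp [smul_eq_mul, mul_comm]
      · rw [uIcc_of_le hψ] at hu
        have : u ∈ Set.Icc (0:ℝ) ψ := ⟨hu.1, hu.2⟩
        simp [threshold, this]
    have h2 : ∫ u in ψ..s, threshold β ψ u = 0 := by
      rw [integral_of_le h]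
      rw [setIntegral_congr_fun measurableSet_Ioc (g := fun _ => (0:ℝ)) (fun u hu => ?_)]
      · simp
      · have : ¬ (u ∈ Set.Icc (0:ℝ) ψ) := by
          simp only [Set.mem_Icc, not_and_or, not_le]
          right; exact hu.1
        simp [threshold, this]
    rw [h1, h2]; ring


section Exp
variable {β : ℝ} {a : ℝ → ℝ} (ha : Measurable a) (h0 : ∀ s, 0 ≤ a s) (h1 : ∀ s, a s ≤ β)
include ha h0 h1

lemma cum_subst' {h : ℝ → ℝ} (hh : Continuous h) {t : ℝ} (ht : 0 ≤ t) :
    (∫ s in (0:ℝ)..t, h (cum a s) * a s) = ∫ y in (0:ℝ)..(cum a t), h y :=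
  cum_subst ha h0 h1 (aII ha h0 h1) (cum_mono ha h0 h1) (cum_cont ha h0 h1)
    (fun {_} hs => cum_nonneg ha h0 h1 hs) hh ht

lemma exp_cum_int {t : ℝ} (ht : 0 ≤ t) :
    (∫ s in (0:ℝ)..t, Real.exp (-(cum a s)) * a s) = 1 - Real.exp (-(cum a t)) := by
  rw [cum_subst' ha h0 h1 (h := fun y => Real.exp (-y)) (by continuity) ht]
  have hF : ∀ y : ℝ, HasDerivAt (fun y => -Real.exp (-y)) (Real.exp (-y)) y := by
    intro y
    have h1 : HasDerivAt (fun y : ℝ => -y) (-1) y := (hasDerivAt_id y).neg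
    have h2 := (h1.exp).fun_neg
    refine h2.congr_deriv ?_
    simp
  rw [integral_eq_sub_of_hasDerivAt (fun y _ => hF y)
    (Continuous.intervalIntegrable (by continuity) _ _)]
  simp; ring

lemma id_exp_cum_int {t : ℝ} (ht : 0 ≤ t) :
    (∫ s in (0:ℝ)..t, cum a s * Real.exp (-(cum a s)) * a s)
      = 1 - (cum a t + 1) * Real.exp (-(cum a t)) := by
  have := cum_subst' ha h0 h1 (h := fun y => y * Real.exp (-y)) (by continuity) ht
  rw [show (fun s => cum a s * Real.exp (-(cum a s)) * a s)
    = fun s => (fun y => y * Real.exp (-y)) (cum a s) * a s from rfl, this]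
  have hF : ∀ y : ℝ, HasDerivAt (fun y => -((y+1) * Real.exp (-y)))
      (y * Real.exp (-y)) y := by
    intro y
    have h1 : HasDerivAt (fun y : ℝ => -y) (-1) y := (hasDerivAt_id y).neg
    have h2 : HasDerivAt (fun y : ℝ => y + 1) 1 y := (hasDerivAt_id y).add_const 1
    have h3 := (h2.fun_mul h1.exp).fun_neg
    refine h3.congr_deriv ?_
    simp; ring
  rw [integral_eq_sub_of_hasDerivAt (fun y _ => hF y)
    (Continuous.intervalIntegrable (by continuity) _ _)]
  simp; ring

end Exp

lemma exp_neg_le_one {x : ℝ} (hx : 0 ≤ x) : Real.exp (-x) ≤ 1 := by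
  simpa using Real.exp_le_exp.mpr (by linarith : -x ≤ (0:ℝ))

lemma prod3_le {x y z X Z : ℝ} (hx0 : 0 ≤ x) (hy0 : 0 ≤ y) (hz0 : 0 ≤ z)
    (hx : x ≤ X) (hy : y ≤ 1) (hz : z ≤ Z) : x * y * z ≤ X * Z := by
  have h1 : y * z ≤ Z := by nlinarith
  calc x * y * z = x * (y * z) := by ring
    _ ≤ X * (y * z) := mul_le_mul_of_nonneg_right hx (mul_nonneg hy0 hz0)
    _ ≤ X * Z := mul_le_mul_of_nonneg_left h1 (hx0.trans hx)

lemma II_Icc {T : ℝ} (hT : 0 ≤ T) {f : ℝ → ℝ} (hf : Measurable f) {C : ℝ}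
    (hC : ∀ s ∈ Set.Icc 0 T, |f s| ≤ C) : IntervalIntegrable f volume 0 T := by
  rw [intervalIntegrable_iff_integrableOn_Ioc_of_le hT]
  refine MeasureTheory.Integrable.mono' (integrable_const C) hf.aestronglyMeasurable ?_
  rw [ae_restrict_iff' measurableSet_Ioc]
  exact Filter.Eventually.of_forall fun s hs => hC s ⟨le_of_lt hs.1, hs.2⟩

lemma master {T ν βa βb : ℝ} (hT : 0 ≤ T) {a b : ℝ → ℝ}
    (ha : Measurable a) (ha0 : ∀ s, 0 ≤ a s) (ha1 : ∀ s, a s ≤ βa)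
    (hb : Measurable b) (hb0 : ∀ s, 0 ≤ b s) (hb1 : ∀ s, b s ≤ βb) :
    oneLockPayoff T ν a b
      = 1 - ν + (ν - Real.exp (-(cum b T))) * Real.exp (-(cum a T))
        - ∫ u in (0:ℝ)..T, b u * Real.exp (-(cum b u)) * Real.exp (-(cum a u)) := by
  have hβa : 0 ≤ βa := le_trans (ha0 0) (ha1 0)
  have hβb : 0 ≤ βb := le_trans (hb0 0) (hb1 0)
  have hAc : Continuous (cum a) := cum_cont ha ha0 ha1
  have hBc : Continuous (cum b) := cum_cont hb hb0 hb1
  have hA0 : ∀ s ∈ Set.Icc (0:ℝ) T, 0 ≤ cum a s := fun s hs => cum_nonneg ha ha0 ha1 hs.1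
  have hB0 : ∀ s ∈ Set.Icc (0:ℝ) T, 0 ≤ cum b s := fun s hs => cum_nonneg hb hb0 hb1 hs.1
  have mA : Measurable fun s => Real.exp (-(cum a s)) :=
    (Real.continuous_exp.comp hAc.neg).measurable
  have mB : Measurable fun s => Real.exp (-(cum b s)) :=
    (Real.continuous_exp.comp hBc.neg).measurable
  have I1 : IntervalIntegrable
      (fun s => Real.exp (-(cum b s)) * Real.exp (-(cum a s)) * a s) volume 0 T := by
    refine II_Icc hT ((mB.mul mA).mul ha) (C := 1 * βa) (fun s hs => ?_)
    rw [abs_of_nonneg (mul_nonneg (mul_nonneg (Real.exp_pos _).le (Real.exp_pos _).le) (ha0 s))]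
    exact prod3_le (Real.exp_pos _).le (Real.exp_pos _).le (ha0 s)
      (exp_neg_le_one (hB0 s hs)) (exp_neg_le_one (hA0 s hs)) (ha1 s)
  have I2 : IntervalIntegrable
      (fun s => b s * Real.exp (-(cum b s)) * Real.exp (-(cum a s))) volume 0 T := by
    refine II_Icc hT ((hb.mul mB).mul mA) (C := βb * 1) (fun s hs => ?_)
    rw [abs_of_nonneg (mul_nonneg (mul_nonneg (hb0 s) (Real.exp_pos _).le) (Real.exp_pos _).le)]
    exact prod3_le (hb0 s) (Real.exp_pos _).le (Real.exp_pos _).le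
      (hb1 s) (exp_neg_le_one (hB0 s hs)) (exp_neg_le_one (hA0 s hs))
  have I3 : IntervalIntegrable
      (fun s => cum a s * Real.exp (-(cum a s)) * a s) volume 0 T := by
    refine II_Icc hT ((hAc.measurable.mul mA).mul ha) (C := (βa * T) * βa) (fun s hs => ?_)
    rw [abs_of_nonneg (mul_nonneg (mul_nonneg (hA0 s hs) (Real.exp_pos _).le) (ha0 s))]
    exact prod3_le (hA0 s hs) (Real.exp_pos _).le (ha0 s)
      (le_trans (cum_le ha ha0 ha1 hs.1) (by nlinarith [hs.2]))
      (exp_neg_le_one (hA0 s hs)) (ha1 s)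
  have hcab : ∀ s : ℝ, cum (fun u => a u + b u) s = cum a s + cum b s := fun s =>
    intervalIntegral.integral_add (aII ha ha0 ha1 0 s) (aII hb hb0 hb1 0 s)
  have e1 : (∫ s in (0:ℝ)..T, (Real.exp (-(cum b s)) * Real.exp (-(cum a s)) * a s
        + b s * Real.exp (-(cum b s)) * Real.exp (-(cum a s))))
      = 1 - Real.exp (-(cum a T)) * Real.exp (-(cum b T)) := by
    calc (∫ s in (0:ℝ)..T, (Real.exp (-(cum b s)) * Real.exp (-(cum a s)) * a s
          + b s * Real.exp (-(cum b s)) * Real.exp (-(cum a s))))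
        = ∫ s in (0:ℝ)..T,
            Real.exp (-(cum (fun u => a u + b u) s)) * ((fun u => a u + b u) s) :=
          integral_congr (fun s _ => by
            simp only [hcab s, neg_add, Real.exp_add]; ring)
      _ = 1 - Real.exp (-(cum (fun u => a u + b u) T)) :=
          exp_cum_int (β := βa + βb) (by exact ha.add hb)
            (fun s => add_nonneg (ha0 s) (hb0 s))
            (fun s => add_le_add (ha1 s) (hb1 s)) hT
      _ = 1 - Real.exp (-(cum a T)) * Real.exp (-(cum b T)) := by
          rw [hcab T, neg_add, Real.exp_add]
  rw [intervalIntegral.integral_add I1 I2] at e1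
  have e4 : (∫ s in (0:ℝ)..T, Real.exp (-(cum b s)) * Real.exp (-(cum a s)) * a s)
      = 1 - Real.exp (-(cum a T)) * Real.exp (-(cum b T))
        - ∫ s in (0:ℝ)..T, b s * Real.exp (-(cum b s)) * Real.exp (-(cum a s)) := by
    linarith [e1]
  have e3 := id_exp_cum_int ha ha0 ha1 hT
  have eint : (fun s => (Real.exp (-(cum b s)) - ν * cum a s) * Real.exp (-(cum a s)) * a s)
      = fun s => (Real.exp (-(cum b s)) * Real.exp (-(cum a s)) * a s)
          - ν * (cum a s * Real.exp (-(cum a s)) * a s) := by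
    funext s; ring
  rw [oneLockPayoff, eint, intervalIntegral.integral_sub I1 (I3.const_mul ν),
    intervalIntegral.integral_const_mul, e4, e3]
  ring

lemma psi_hasDeriv (βi βj ν : ℝ) (hβi : 0 < βi) (hβj : 0 < βj) (t : ℝ) :
    HasDerivAt (fun t => ν * Real.exp (-(βi*t)) - βi/(βi+βj) * Real.exp (-((βi+βj)*t))
        - βj/(βi+βj))
      (βi * Real.exp (-(βi*t)) * (Real.exp (-(βj*t)) - ν)) t := by
  have hc : βi + βj ≠ 0 := by positivity
  have h1 : HasDerivAt (fun t : ℝ => -(βi*t)) (-βi) t := by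
    simpa using ((hasDerivAt_id t).const_mul βi).fun_neg
  have h2 : HasDerivAt (fun t : ℝ => -((βi+βj)*t)) (-(βi+βj)) t := by
    simpa using ((hasDerivAt_id t).const_mul (βi+βj)).fun_neg
  have h3 := (h1.exp).const_mul ν
  have h4 := (h2.exp).const_mul (βi/(βi+βj))
  have h5 := (h3.fun_sub h4).sub_const (βj/(βi+βj))
  refine h5.congr_deriv ?_
  rw [show Real.exp (-((βi+βj)*t)) = Real.exp (-(βi*t)) * Real.exp (-(βj*t)) by
    rw [← Real.exp_add]; ring_nf]
  field_simp
  ring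

lemma psi_max {T ν βi βj : ℝ} (hT : 0 < T) (hν0 : 0 < ν) (hν1 : ν < 1)
    (hβi : 0 < βi) (hβj : 0 < βj) {t : ℝ} (ht : t ∈ Set.Icc 0 T) :
    ν * Real.exp (-(βi*t)) - βi/(βi+βj) * Real.exp (-((βi+βj)*t)) - βj/(βi+βj)
      ≤ ν * Real.exp (-(βi * min (-(Real.log ν) / βj) T))
        - βi/(βi+βj) * Real.exp (-((βi+βj) * min (-(Real.log ν) / βj) T)) - βj/(βi+βj) := by
  set θ0 := -(Real.log ν) / βj with hθ0
  set θ := min θ0 T with hθdef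
  have hlog : Real.log ν < 0 := Real.log_neg hν0 hν1
  have hθ0pos : 0 < θ0 := by
    rw [hθ0]; exact div_pos (by linarith) hβj
  have hkey : βj * θ0 = -(Real.log ν) := by
    rw [hθ0]; field_simp
  have hθ0' : 0 ≤ θ := le_min hθ0pos.le hT.le
  set ψ : ℝ → ℝ := fun t => ν * Real.exp (-(βi*t)) - βi/(βi+βj) * Real.exp (-((βi+βj)*t))
    - βj/(βi+βj) with hψ
  have hcont : Continuous ψ := by
    apply Continuous.sub
    apply Continuous.sub
    · exact continuous_const.mul (Real.continuous_exp.comp (by continuity))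
    · exact continuous_const.mul (Real.continuous_exp.comp (by continuity))
    · exact continuous_const
  have hD : ∀ x, deriv ψ x = βi * Real.exp (-(βi*x)) * (Real.exp (-(βj*x)) - ν) :=
    fun x => (psi_hasDeriv βi βj ν hβi hβj x).deriv
  have hdiff : ∀ x, DifferentiableAt ℝ ψ x :=
    fun x => (psi_hasDeriv βi βj ν hβi hβj x).differentiableAt
  show ψ t ≤ ψ θ
  rcases le_total t θ with hcase | hcase
  · -- monotone on [0, θ]
    have hmono : MonotoneOn ψ (Set.Icc 0 θ) := by
      apply monotoneOn_of_deriv_nonneg (convex_Icc 0 θ) hcont.continuousOn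
        (fun x _ => (hdiff x).differentiableWithinAt)
      intro x hx
      rw [interior_Icc] at hx
      rw [hD x]
      have hxθ0 : x < θ0 := lt_of_lt_of_le hx.2 (min_le_left _ _)
      have : Real.log ν < -(βj * x) := by
        have h := mul_lt_mul_of_pos_left hxθ0 hβj
        rw [hkey] at h
        linarith
      have hexp : ν < Real.exp (-(βj*x)) := by
        calc ν = Real.exp (Real.log ν) := (Real.exp_log hν0).symm
          _ < Real.exp (-(βj*x)) := Real.exp_lt_exp.2 this
      have : 0 ≤ Real.exp (-(βj*x)) - ν := by linarith
      positivity
    exact hmono ⟨ht.1, hcase⟩ ⟨hθ0', le_rfl⟩ hcase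
  · -- t ≥ θ
    rcases le_or_gt θ0 T with hθ0T | hθ0T
    · have hθeq : θ = θ0 := min_eq_left hθ0T
      have hanti : AntitoneOn ψ (Set.Icc θ0 T) := by
        apply antitoneOn_of_deriv_nonpos (convex_Icc θ0 T) hcont.continuousOn
          (fun x _ => (hdiff x).differentiableWithinAt)
        intro x hx
        rw [interior_Icc] at hx
        rw [hD x]
        have : -(βj * x) < Real.log ν := by
          have h := mul_lt_mul_of_pos_left hx.1 hβj
          rw [hkey] at h
          linarith
        have hexp : Real.exp (-(βj*x)) < ν := by
          calc Real.exp (-(βj*x)) < Real.exp (Real.log ν) := Real.exp_lt_exp.2 this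
            _ = ν := Real.exp_log hν0
        have h1 : Real.exp (-(βj*x)) - ν ≤ 0 := by linarith
        have h2 : 0 < βi * Real.exp (-(βi*x)) := by positivity
        exact mul_nonpos_of_nonneg_of_nonpos h2.le h1
      rw [hθeq] at hcase ⊢
      exact hanti ⟨le_rfl, hθ0T⟩ ⟨hcase, ht.2⟩ hcase
    · have hθeq : θ = T := min_eq_right hθ0T.le
      have : t = θ := le_antisymm (hθeq ▸ ht.2) hcase
      rw [this]

lemma psi_closed {T βi βj ν : ℝ} (hβi : 0 < βi) (hβj : 0 < βj) {t : ℝ}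
    (ht : t ∈ Set.Icc (0:ℝ) T) :
    (ν - Real.exp (-(βj*T))) * Real.exp (-(βi*t))
      - (∫ u in (0:ℝ)..T, βj * Real.exp (-(βj*u)) * Real.exp (-(βi * min u t)))
    = ν * Real.exp (-(βi*t)) - βi/(βi+βj) * Real.exp (-((βi+βj)*t)) - βj/(βi+βj) := by
  have hc : (0:ℝ) < βi + βj := by linarith
  have hcont : Continuous fun u => βj * Real.exp (-(βj*u)) * Real.exp (-(βi * min u t)) := by
    apply Continuous.mul
    · exact continuous_const.mul (Real.continuous_exp.comp (by continuity))
    · exact Real.continuous_exp.comp (by continuity)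
  have hsplit : (∫ u in (0:ℝ)..T, βj * Real.exp (-(βj*u)) * Real.exp (-(βi * min u t)))
      = (∫ u in (0:ℝ)..t, βj * Real.exp (-(βj*u)) * Real.exp (-(βi * min u t)))
        + ∫ u in t..T, βj * Real.exp (-(βj*u)) * Real.exp (-(βi * min u t)) :=
    (integral_add_adjacent_intervals (hcont.intervalIntegrable _ _)
      (hcont.intervalIntegrable _ _)).symm
  have h1 : (∫ u in (0:ℝ)..t, βj * Real.exp (-(βj*u)) * Real.exp (-(βi * min u t)))
      = βj/(βi+βj) * (1 - Real.exp (-((βi+βj)*t))) := by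
    rw [integral_congr (g := fun u => βj * Real.exp (-((βi+βj)*u))) (fun u hu => ?_),
      int_exp_mul βj (βi+βj) 0 t hc.ne']
    · norm_num
    · rw [uIcc_of_le ht.1] at hu
      rw [min_eq_left hu.2, mul_assoc, ← Real.exp_add]
      ring_nf
  have h2 : (∫ u in t..T, βj * Real.exp (-(βj*u)) * Real.exp (-(βi * min u t)))
      = Real.exp (-(βi*t)) * (Real.exp (-(βj*t)) - Real.exp (-(βj*T))) := by
    rw [integral_congr (g := fun u => (βj * Real.exp (-(βi*t))) * Real.exp (-(βj*u)))
      (fun u hu => ?_), int_exp_mul (βj * Real.exp (-(βi*t))) βj t T hβj.ne']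
    · field_simp
    · rw [uIcc_of_le ht.2] at hu
      rw [min_eq_right hu.1]
      ring
  rw [hsplit, h1, h2, show Real.exp (-((βi+βj)*t)) = Real.exp (-(βi*t)) * Real.exp (-(βj*t)) by
    rw [← Real.exp_add]; ring_nf]
  field_simp
  ring

/-- Paper's Theorem 3, case `βʲ > βⁱ`: with `θⁱ = min{−(ln ν)/βʲ, T}`, the
pair `(Γ_{βⁱ}(θⁱ), Γ_{βʲ}(T))` is a Nash equilibrium of the one-lock game. -/
theorem nash_equilibrium_one_lock_asymmetric
    (T ν βi βj : ℝ) (hT : 0 < T) (hν0 : 0 < ν) (hν1 : ν < 1)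
    (hβi : 0 < βi) (hβij : βi < βj) :
    (∀ a : ℝ → ℝ, Measurable a → (∀ t ∈ Icc (0:ℝ) T, a t ∈ Icc (0:ℝ) βi) →
        oneLockPayoff T ν a (threshold βj T)
          ≤ oneLockPayoff T ν (threshold βi (min (-(Real.log ν) / βj) T))
              (threshold βj T)) ∧
    (∀ b : ℝ → ℝ, Measurable b → (∀ t ∈ Icc (0:ℝ) T, b t ∈ Icc (0:ℝ) βj) →
        oneLockPayoff T ν b (threshold βi (min (-(Real.log ν) / βj) T))
          ≤ oneLockPayoff T ν (threshold βj T)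
              (threshold βi (min (-(Real.log ν) / βj) T))) := by
  have hβj : 0 < βj := hβi.trans hβij
  have hlog : Real.log ν < 0 := Real.log_neg hν0 hν1
  set θ0 := -(Real.log ν) / βj with hθ0def
  set θ := min θ0 T with hθdef
  have hθ0pos : 0 < θ0 := div_pos (by linarith) hβj
  have hθ0' : (0:ℝ) ≤ θ := le_min hθ0pos.le hT.le
  have hθT : θ ≤ T := min_le_right _ _
  have hθmem : θ ∈ Set.Icc (0:ℝ) T := ⟨hθ0', hθT⟩
  -- the two equilibrium controls
  have hastar_meas : Measurable (threshold βi θ) := threshold_measurable βi θ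
  have hastar0 : ∀ s, 0 ≤ threshold βi θ s := threshold_nonneg hβi.le θ
  have hastar1 : ∀ s, threshold βi θ s ≤ βi := threshold_le hβi.le θ
  have hbstar_meas : Measurable (threshold βj T) := threshold_measurable βj T
  have hbstar0 : ∀ s, 0 ≤ threshold βj T s := threshold_nonneg hβj.le T
  have hbstar1 : ∀ s, threshold βj T s ≤ βj := threshold_le hβj.le T
  have hcum_astar : ∀ s ∈ Set.Icc (0:ℝ) T, cum (threshold βi θ) s = βi * min s θ :=
    fun s hs => cum_threshold hβi.le hθ0' hs.1
  have hcum_astarT : cum (threshold βi θ) T = βi * θ := by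
    rw [hcum_astar T ⟨hT.le, le_rfl⟩, min_eq_right hθT]
  have hcum_bstar : ∀ s ∈ Set.Icc (0:ℝ) T, cum (threshold βj T) s = βj * s :=
    fun s hs => by rw [cum_threshold hβj.le hT.le hs.1, min_eq_left hs.2]
  have hcum_bstarT : cum (threshold βj T) T = βj * T := hcum_bstar T ⟨hT.le, le_rfl⟩
  -- ν ≤ e^{-βi θ}
  have hνθ : ν ≤ Real.exp (-(βi*θ)) := by
    have h1 : βi * θ ≤ -(Real.log ν) := by
      have h2 : βi * θ ≤ βi * θ0 := mul_le_mul_of_nonneg_left (min_le_left _ _) hβi.le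
      have h3 : βi * θ0 * βj = βi * (-(Real.log ν)) := by
        rw [hθ0def]; field_simp
      nlinarith [mul_le_mul_of_nonneg_right hβij.le (by linarith : (0:ℝ) ≤ -(Real.log ν))]
    calc ν = Real.exp (Real.log ν) := (Real.exp_log hν0).symm
      _ ≤ Real.exp (-(βi*θ)) := Real.exp_le_exp.2 (by linarith)
  constructor
  · -- agent i's side
    intro a hameas hamem
    set a' := fun s => if s ∈ Set.Icc (0:ℝ) T then a s else 0 with ha'def
    have ha'meas : Measurable a' :=
      Measurable.ite measurableSet_Icc hameas measurable_const
    have ha'0 : ∀ s, 0 ≤ a' s := by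
      intro s; rw [ha'def]; dsimp only
      split
      · exact (hamem s ‹_›).1
      · exact le_rfl
    have ha'1 : ∀ s, a' s ≤ βi := by
      intro s; rw [ha'def]; dsimp only
      split
      · exact (hamem s ‹_›).2
      · exact hβi.le
    have hcum_eq : ∀ s ∈ Set.Icc (0:ℝ) T, cum a' s = cum a s := by
      intro s hs
      refine integral_congr (fun u hu => ?_)
      rw [uIcc_of_le hs.1] at hu
      have : u ∈ Set.Icc (0:ℝ) T := ⟨hu.1, hu.2.trans hs.2⟩
      rw [ha'def]; simp [this]
    have hpayoff_eq : oneLockPayoff T ν a (threshold βj T)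
        = oneLockPayoff T ν a' (threshold βj T) := by
      unfold oneLockPayoff
      rw [hcum_eq T ⟨hT.le, le_rfl⟩]
      congr 1
      refine integral_congr (fun s hs => ?_)
      rw [uIcc_of_le hT.le] at hs
      rw [hcum_eq s hs]
      congr 1
      rw [ha'def]; simp [hs]
    rw [hpayoff_eq]
    -- master formula for a'
    have hm := master (ν := ν) hT.le ha'meas ha'0 ha'1 hbstar_meas hbstar0 hbstar1
    rw [hcum_bstarT] at hm
    have hintb : (∫ u in (0:ℝ)..T, threshold βj T u * Real.exp (-(cum (threshold βj T) u))
          * Real.exp (-(cum a' u)))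
        = ∫ u in (0:ℝ)..T, βj * Real.exp (-(βj*u)) * Real.exp (-(cum a' u)) := by
      refine integral_congr (fun u hu => ?_)
      rw [uIcc_of_le hT.le] at hu
      rw [hcum_bstar u hu, show threshold βj T u = βj from by simp [threshold, hu]]
    rw [hintb] at hm
    -- the candidate level tA
    set tA := cum a' T / βi with htAdef
    have hcumT0 : 0 ≤ cum a' T := cum_nonneg ha'meas ha'0 ha'1 hT.le
    have hcumT1 : cum a' T ≤ βi * T := by
      have := cum_le ha'meas ha'0 ha'1 hT.le
      linarith [this]
    have htA : tA ∈ Set.Icc (0:ℝ) T :=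
      ⟨div_nonneg hcumT0 hβi.le, by rw [htAdef, div_le_iff₀ hβi]; linarith⟩
    have hβitA : βi * tA = cum a' T := by
      rw [htAdef]; field_simp
    -- pointwise comparison of integrands
    have hAc : Continuous (cum a') := cum_cont ha'meas ha'0 ha'1
    have mexpA : Measurable fun u => Real.exp (-(cum a' u)) :=
      (Real.continuous_exp.comp hAc.neg).measurable
    have hcontbj : Continuous fun u : ℝ => βj * Real.exp (-(βj*u)) :=
      continuous_const.mul (Real.continuous_exp.comp (continuous_const.mul continuous_id).neg)
    have hcont1 : Continuous fun u : ℝ => βj * Real.exp (-(βj*u))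
        * Real.exp (-(βi * min u tA)) :=
      hcontbj.mul (Real.continuous_exp.comp
        (continuous_const.mul (continuous_id.min continuous_const)).neg)
    have hIIa' : IntervalIntegrable
        (fun u => βj * Real.exp (-(βj*u)) * Real.exp (-(cum a' u))) volume 0 T := by
      refine II_Icc hT.le (hcontbj.measurable.mul mexpA) (C := βj * 1) (fun s hs => ?_)
      rw [abs_of_nonneg (mul_nonneg (mul_nonneg hβj.le (Real.exp_pos _).le) (Real.exp_pos _).le)]
      exact prod3_le hβj.le (Real.exp_pos _).le (Real.exp_pos _).le le_rfl
        (exp_neg_le_one (mul_nonneg hβj.le hs.1))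
        (exp_neg_le_one (cum_nonneg ha'meas ha'0 ha'1 hs.1))
    have hcomp : (∫ u in (0:ℝ)..T, βj * Real.exp (-(βj*u)) * Real.exp (-(βi * min u tA)))
        ≤ ∫ u in (0:ℝ)..T, βj * Real.exp (-(βj*u)) * Real.exp (-(cum a' u)) := by
      refine integral_mono_on hT.le (hcont1.intervalIntegrable _ _) hIIa' (fun u hu => ?_)
      have hle : cum a' u ≤ βi * min u tA := by
        rw [mul_min_of_nonneg _ _ hβi.le]
        refine le_min (cum_le ha'meas ha'0 ha'1 hu.1) ?_
        rw [hβitA]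
        exact cum_mono ha'meas ha'0 ha'1 hu.2
      have hexp := Real.exp_le_exp.2 (neg_le_neg hle)
      have hpos : (0:ℝ) ≤ βj * Real.exp (-(βj*u)) := by positivity
      exact mul_le_mul_of_nonneg_left hexp hpos
    -- closed forms
    have hclosedA := psi_closed (T := T) (ν := ν) hβi hβj htA
    have hclosedθ := psi_closed (T := T) (ν := ν) hβi hβj hθmem
    have hmax := psi_max hT hν0 hν1 hβi hβj htA
    -- equilibrium payoff
    have hmstar := master (ν := ν) hT.le hastar_meas hastar0 hastar1
      hbstar_meas hbstar0 hbstar1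
    rw [hcum_bstarT, hcum_astarT] at hmstar
    have hintstar : (∫ u in (0:ℝ)..T, threshold βj T u
          * Real.exp (-(cum (threshold βj T) u)) * Real.exp (-(cum (threshold βi θ) u)))
        = ∫ u in (0:ℝ)..T, βj * Real.exp (-(βj*u)) * Real.exp (-(βi * min u θ)) := by
      refine integral_congr (fun u hu => ?_)
      rw [uIcc_of_le hT.le] at hu
      rw [hcum_bstar u hu, hcum_astar u hu,
        show threshold βj T u = βj from by simp [threshold, hu]]
    rw [hintstar] at hmstar
    -- put everything together
    rw [hm, hmstar, ← hβitA]
    have e1 : (ν - Real.exp (-(βj*T))) * Real.exp (-(βi*tA))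
        - (∫ u in (0:ℝ)..T, βj * Real.exp (-(βj*u)) * Real.exp (-(βi * min u tA)))
        ≤ (ν - Real.exp (-(βj*T))) * Real.exp (-(βi*θ))
          - ∫ u in (0:ℝ)..T, βj * Real.exp (-(βj*u)) * Real.exp (-(βi * min u θ)) := by
      rw [hclosedA, hclosedθ]
      exact hmax
    linarith [hcomp, e1]
  · -- agent j's side
    intro b hbmeas hbmem
    set b' := fun s => if s ∈ Set.Icc (0:ℝ) T then b s else 0 with hb'def
    have hb'meas : Measurable b' :=
      Measurable.ite measurableSet_Icc hbmeas measurable_const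
    have hb'0 : ∀ s, 0 ≤ b' s := by
      intro s; rw [hb'def]; dsimp only
      split
      · exact (hbmem s ‹_›).1
      · exact le_rfl
    have hb'1 : ∀ s, b' s ≤ βj := by
      intro s; rw [hb'def]; dsimp only
      split
      · exact (hbmem s ‹_›).2
      · exact hβj.le
    have hcum_eq : ∀ s ∈ Set.Icc (0:ℝ) T, cum b' s = cum b s := by
      intro s hs
      refine integral_congr (fun u hu => ?_)
      rw [uIcc_of_le hs.1] at hu
      have : u ∈ Set.Icc (0:ℝ) T := ⟨hu.1, hu.2.trans hs.2⟩
      rw [hb'def]; simp [this]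
    have hpayoff_eq : oneLockPayoff T ν b (threshold βi θ)
        = oneLockPayoff T ν b' (threshold βi θ) := by
      unfold oneLockPayoff
      rw [hcum_eq T ⟨hT.le, le_rfl⟩]
      congr 1
      refine integral_congr (fun s hs => ?_)
      rw [uIcc_of_le hT.le] at hs
      rw [hcum_eq s hs]
      congr 1
      rw [hb'def]; simp [hs]
    rw [hpayoff_eq]
    have hBc : Continuous (cum b') := cum_cont hb'meas hb'0 hb'1
    have mexpB : Measurable fun u => Real.exp (-(cum b' u)) :=
      (Real.continuous_exp.comp hBc.neg).measurable
    have hm := master (ν := ν) hT.le hb'meas hb'0 hb'1 hastar_meas hastar0 hastar1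
    rw [hcum_astarT] at hm
    have hmstar := master (ν := ν) hT.le hbstar_meas hbstar0 hbstar1
      hastar_meas hastar0 hastar1
    rw [hcum_astarT, hcum_bstarT] at hmstar
    rw [hm, hmstar]
    -- compare the two expressions term by term
    have hterm1 : (ν - Real.exp (-(βi*θ))) * Real.exp (-(cum b' T))
        ≤ (ν - Real.exp (-(βi*θ))) * Real.exp (-(βj*T)) := by
      have h1 : cum b' T ≤ βj * T := cum_le hb'meas hb'0 hb'1 hT.le
      have h2 : Real.exp (-(βj*T)) ≤ Real.exp (-(cum b' T)) :=
        Real.exp_le_exp.2 (neg_le_neg h1)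
      have h3 : ν - Real.exp (-(βi*θ)) ≤ 0 := by linarith
      exact mul_le_mul_of_nonpos_left h2 h3
    have hterm2 : (∫ u in (0:ℝ)..T, threshold βi θ u
          * Real.exp (-(cum (threshold βi θ) u)) * Real.exp (-(cum (threshold βj T) u)))
        ≤ ∫ u in (0:ℝ)..T, threshold βi θ u
          * Real.exp (-(cum (threshold βi θ) u)) * Real.exp (-(cum b' u)) := by
      have hAsc : Continuous (cum (threshold βi θ)) := cum_cont hastar_meas hastar0 hastar1
      have hBsc : Continuous (cum (threshold βj T)) := cum_cont hbstar_meas hbstar0 hbstar1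
      have m1 : Measurable fun u => threshold βi θ u
          * Real.exp (-(cum (threshold βi θ) u)) := by
        exact hastar_meas.mul (Real.continuous_exp.comp hAsc.neg).measurable
      have hb1 : IntervalIntegrable (fun u => threshold βi θ u
          * Real.exp (-(cum (threshold βi θ) u)) * Real.exp (-(cum (threshold βj T) u)))
          volume 0 T := by
        refine II_Icc hT.le (m1.mul (Real.continuous_exp.comp hBsc.neg).measurable)
          (C := βi * 1) (fun s hs => ?_)
        rw [abs_of_nonneg (mul_nonneg (mul_nonneg (hastar0 s) (Real.exp_pos _).le)
          (Real.exp_pos _).le)]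
        exact prod3_le (hastar0 s) (Real.exp_pos _).le (Real.exp_pos _).le (hastar1 s)
          (exp_neg_le_one (cum_nonneg hastar_meas hastar0 hastar1 hs.1))
          (exp_neg_le_one (cum_nonneg hbstar_meas hbstar0 hbstar1 hs.1))
      have hb2 : IntervalIntegrable (fun u => threshold βi θ u
          * Real.exp (-(cum (threshold βi θ) u)) * Real.exp (-(cum b' u)))
          volume 0 T := by
        refine II_Icc hT.le (m1.mul mexpB) (C := βi * 1) (fun s hs => ?_)
        rw [abs_of_nonneg (mul_nonneg (mul_nonneg (hastar0 s) (Real.exp_pos _).le)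
          (Real.exp_pos _).le)]
        exact prod3_le (hastar0 s) (Real.exp_pos _).le (Real.exp_pos _).le (hastar1 s)
          (exp_neg_le_one (cum_nonneg hastar_meas hastar0 hastar1 hs.1))
          (exp_neg_le_one (cum_nonneg hb'meas hb'0 hb'1 hs.1))
      refine integral_mono_on hT.le hb1 hb2 (fun u hu => ?_)
      have h1 : cum b' u ≤ cum (threshold βj T) u := by
        rw [hcum_bstar u hu]
        exact cum_le hb'meas hb'0 hb'1 hu.1
      have h2 := Real.exp_le_exp.2 (neg_le_neg h1)
      have hpos : (0:ℝ) ≤ threshold βi θ u * Real.exp (-(cum (threshold βi θ) u)) := by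
        exact mul_nonneg (hastar0 u) (Real.exp_pos _).le
      exact mul_le_mul_of_nonneg_left h2 hpos
    linarith [hterm1, hterm2]
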